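/- Let r > 0, let n ≥ 7 be an integer, set D = r / sin(π/n), and define p_k = (D·cos(2πk/n), D·sin(2πk/n)) for k = 0, …, n−1. Then for every k, every t ≥ 0 and every j ≠ k: ‖p_k + (t/D)·p_k − p_j‖ ≥ 2r > r, and ‖p_k + (t/D)·p_k‖ ≥ D > r. Hence the outward radial ray from p_k does not intersect the closed disk of radius r centered at any other ring point p_j, nor the closed disk of radius r centered at the origin. -/

import Mathlib

open Real Metric

noncomputable def pt (a b : ℝ) : EuclideanSpace ℝ (Fin 2) := WithLp.toLp 2 ![a, b]

noncomputable def ringPt (D : ℝ) (n : ℕ) (k : Fin n) : EuclideanSpace ℝ (Fin 2) :=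
  pt (D * Real.cos (2 * π * k / n)) (D * Real.sin (2 * π * k / n))

/-! The ring points lie on the circle of radius `D`, and two distinct ones subtend an angle
`2πm/n` with `0 < |m| < n`, so their chord `2D|sin(πm/n)|` is at least `2D sin(π/n) = 2r`.
Moving outward from `p` along the ray increases the distance to every point `q` with
`‖q‖ ≤ ‖p‖`, such as the other ring points, because
`‖(1+c)p - q‖² - ‖p - q‖² = c(2+c)‖p‖² - 2c⟪p, q⟫ ≥ 0` by Cauchy–Schwarz. -/

lemma norm_pt (a b : ℝ) : ‖pt a b‖ = √(a ^ 2 + b ^ 2) := by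
  simp [pt, EuclideanSpace.norm_eq, Fin.sum_univ_two, sq_abs]

lemma pt_sub_pt (a b c d : ℝ) : pt a b - pt c d = pt (a - c) (b - d) := by
  ext i; fin_cases i <;> simp [pt]

lemma norm_pt_polar_sub_pt_polar (D a b : ℝ) :
    ‖pt (D * cos a) (D * sin a) - pt (D * cos b) (D * sin b)‖ =
      2 * |D| * |sin ((a - b) / 2)| := by
  have hsq : (D * (cos a - cos b)) ^ 2 + (D * (sin a - sin b)) ^ 2
      = (2 * D * sin ((a - b) / 2)) ^ 2 := by
    rw [cos_sub_cos, sin_sub_sin]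
    linear_combination (2 * D * sin ((a - b) / 2)) ^ 2 * sin_sq_add_cos_sq ((a + b) / 2)
  rw [pt_sub_pt, norm_pt, ← mul_sub, ← mul_sub, hsq, sqrt_sq_eq_abs, abs_mul, abs_mul, abs_two]

lemma norm_ringPt_sub_ringPt (D : ℝ) (n : ℕ) (k j : Fin n) :
    ‖ringPt D n k - ringPt D n j‖ = 2 * |D| * |sin (π * ((k : ℤ) - j : ℤ) / n)| := by
  rw [ringPt, ringPt, norm_pt_polar_sub_pt_polar]
  congr 3
  push_cast
  ring

lemma norm_ringPt (D : ℝ) (n : ℕ) (k : Fin n) : ‖ringPt D n k‖ = |D| := by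
  rw [ringPt, norm_pt, ← sqrt_sq_eq_abs]
  congr 1
  linear_combination D ^ 2 * sin_sq_add_cos_sq (2 * π * k / n)

lemma sin_le_sin_of_le_of_le_pi_sub {a x : ℝ} (ha : 0 ≤ a) (hax : a ≤ x) (hx : x ≤ π - a) :
    sin a ≤ sin x := by
  rcases le_total x (π / 2) with h | h
  · exact sin_le_sin_of_le_of_le_pi_div_two (by linarith [pi_pos]) h hax
  · rw [← sin_pi_sub x]
    exact sin_le_sin_of_le_of_le_pi_div_two (by linarith [pi_pos]) (by linarith) (by linarith)

lemma sin_pi_div_le_abs_sin_pi_mul_div {n : ℕ} {m : ℤ} (hm : m ≠ 0) (hmn : |m| < n) :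
    sin (π / n) ≤ |sin (π * m / n)| := by
  have h1 : (1 : ℝ) ≤ |(m : ℝ)| := by exact_mod_cast Int.one_le_abs hm
  have h2 : |(m : ℝ)| + 1 ≤ n := by exact_mod_cast hmn
  have hn : (0 : ℝ) < n := by linarith
  have habs : |sin (π * m / n)| = |sin (π * |(m : ℝ)| / n)| := by
    rcases abs_choice (m : ℝ) with h | h <;> rw [h]
    rw [mul_neg, neg_div, sin_neg, abs_neg]
  rw [habs]
  refine le_trans ?_ (le_abs_self _)
  apply sin_le_sin_of_le_of_le_pi_sub (by positivity)
  · gcongr; nlinarith [pi_pos]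
  · rw [le_sub_iff_add_le, ← add_div, div_le_iff₀ hn]; nlinarith [pi_pos]

lemma norm_le_norm_add_smul_self {E : Type*} [NormedAddCommGroup E] [NormedSpace ℝ E]
    (p : E) {c : ℝ} (hc : 0 ≤ c) : ‖p‖ ≤ ‖p + c • p‖ := by
  rw [show p + c • p = (1 + c) • p by rw [add_smul, one_smul], norm_smul,
    Real.norm_of_nonneg (by linarith)]
  nlinarith [norm_nonneg p]

lemma norm_sub_le_norm_add_smul_sub {E : Type*} [NormedAddCommGroup E] [InnerProductSpace ℝ E]
    {p q : E} (hq : ‖q‖ ≤ ‖p‖) {c : ℝ} (hc : 0 ≤ c) :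
    ‖p - q‖ ≤ ‖p + c • p - q‖ := by
  have hpq : inner ℝ p q ≤ ‖p‖ ^ 2 := by
    nlinarith [real_inner_le_norm p q, norm_nonneg p, norm_nonneg q]
  rw [← sq_le_sq₀ (norm_nonneg _) (norm_nonneg _),
    show p + c • p = (1 + c) • p by rw [add_smul, one_smul], norm_sub_sq_real, norm_sub_sq_real,
    norm_smul, real_inner_smul_left, Real.norm_of_nonneg (by linarith)]
  nlinarith [mul_le_mul_of_nonneg_left hpq hc, sq_nonneg c, norm_nonneg p]

/-- In the bot-in-the-middle counterexample with `n ≥ 7` and `D = r / sin(π/n)`, the outward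
radial ray from any ring robot stays at distance `≥ 2r > r` from every other ring point and
at distance `≥ D > r` from the origin: no ring robot ever sees any other robot. -/
theorem ring_robot_sees_nothing (r : ℝ) (hr : 0 < r) (n : ℕ) (hn : 7 ≤ n) :
    ∀ k : Fin n, ∀ t : ℝ, 0 ≤ t →
      (∀ j : Fin n, j ≠ k →
        ‖ringPt (r / Real.sin (π / n)) n k +
            (t / (r / Real.sin (π / n))) • ringPt (r / Real.sin (π / n)) n k -
            ringPt (r / Real.sin (π / n)) n j‖ ≥ 2 * r) ∧
      2 * r > r ∧
      ‖ringPt (r / Real.sin (π / n)) n k +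
          (t / (r / Real.sin (π / n))) • ringPt (r / Real.sin (π / n)) n k‖ ≥
        r / Real.sin (π / n) ∧
      r / Real.sin (π / n) > r := by
  have hn7 : (7 : ℝ) ≤ n := by exact_mod_cast hn
  have hπn : 0 < π / n := by positivity
  have hs0 : 0 < sin (π / n) := sin_pos_of_pos_of_lt_pi hπn (div_lt_self pi_pos (by linarith))
  have hs1 : sin (π / n) < 1 :=
    (sin_lt hπn).trans_le <| (div_le_one (by linarith)).2 (by linarith [pi_le_four])
  set D := r / sin (π / n) with hD
  have hD0 : 0 < D := div_pos hr hs0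
  have hDr : r < D := by rw [hD, lt_div_iff₀ hs0]; nlinarith
  intro k t ht
  have hc : 0 ≤ t / D := div_nonneg ht hD0.le
  refine ⟨fun j hjk => ?_, by linarith, ?_, hDr⟩
  · have hkj : ((k : ℤ) - j : ℤ) ≠ 0 := by have := Fin.val_ne_of_ne hjk; omega
    have hkjn : |((k : ℤ) - j : ℤ)| < n := by rw [abs_lt]; omega
    calc 2 * r = 2 * |D| * sin (π / n) := by rw [abs_of_pos hD0, hD]; field_simp
      _ ≤ ‖ringPt D n k - ringPt D n j‖ := by
        rw [norm_ringPt_sub_ringPt]; gcongr; exact sin_pi_div_le_abs_sin_pi_mul_div hkj hkjn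
      _ ≤ _ := norm_sub_le_norm_add_smul_sub (by rw [norm_ringPt, norm_ringPt]) hc
  · calc D = ‖ringPt D n k‖ := by rw [norm_ringPt, abs_of_pos hD0]
      _ ≤ _ := norm_le_norm_add_smul_self _ hc
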